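/- Let α, β > 0 and (v, θ, ω) ∈ ℝ³ with H₁(v,θ,ω)·H₂(v,θ,ω) < 0. Set t₁ = −H₁(v,θ,ω)/(2αω), t₂ = |ω|/α, t₃ = |v|/β − t₁, and let s₃, s₄ ∈ {−1,1} satisfy s₃·v = −|v| and s₄·ω = −|ω|. Then t₁ > 0, t₃ > 0, and the β-α-β final state from (v, θ, ω) with durations t₁, t₂, t₃ and signs s₃, s₄ equals (0, 0, 0). -/

import Mathlib

noncomputable def H1 (α v θ ω : ℝ) : ℝ := 2 * α * θ + ω * |ω|

noncomputable def H2 (α β v θ ω : ℝ) : ℝ := ω * |ω| / (2 * α) + θ + ω * |v| / β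

/-- The β-α-β final state `(v_f, θ_f, ω_f)`: linear acceleration `s₃ * β` for time `t₁`,
angular acceleration `s₄ * α` for time `t₂`, linear acceleration `s₃ * β` for time `t₃`. -/
noncomputable def babFinal (α β v θ ω t₁ t₂ t₃ s₃ s₄ : ℝ) : ℝ × ℝ × ℝ :=
  (v + s₃ * β * (t₁ + t₃),
   θ + ω * t₁ + ω * t₂ + s₄ * α * t₂ ^ 2 / 2 + (ω + s₄ * α * t₂) * t₃,
   ω + s₄ * α * t₂)

/-!
With `t₁ = -H₁/(2αω)` and `t₃ = |v|/β - t₁` one has `H₁ = -2αω t₁` and `H₂ = ω t₃`, so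
`H₁ H₂ = -2αω² t₁ t₃`. Hence `H₁ H₂ < 0` forces `ω ≠ 0` and `t₁ t₃ > 0`, and since
`t₁ + t₃ = |v|/β ≥ 0` both durations are positive. In the final state the angular phase of
length `|ω|/α` stops the rotation, the two linear phases of total length `|v|/β` stop the
translation, and `t₁` was chosen so that the accumulated angle is exactly `-θ`.
-/

theorem mul_abs_eq_neg_of_mul_eq_neg_abs {R : Type*} [CommRing R] [LinearOrder R]
    [IsStrictOrderedRing R] {s x : R} (h : s * x = -|x|) : s * |x| = -x := by
  rcases eq_or_ne x 0 with rfl | hx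
  · simp
  · refine mul_right_cancel₀ hx ?_
    calc s * |x| * x = s * x * |x| := by ring
      _ = -(|x| * |x|) := by rw [h, neg_mul]
      _ = -x * x := by rw [abs_mul_abs_self, neg_mul]

theorem ne_zero_of_H1_mul_H2_neg {α β v θ ω : ℝ} (hα : 0 < α)
    (h : H1 α v θ ω * H2 α β v θ ω < 0) : ω ≠ 0 := by
  rintro rfl
  simp only [H1, H2, abs_zero, mul_zero, zero_mul, zero_div, add_zero, zero_add] at h
  nlinarith [mul_nonneg hα.le (sq_nonneg θ)]

theorem pos_and_pos_of_mul_pos_of_add_nonneg {R : Type*} [Semiring R] [LinearOrder R]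
    [IsStrictOrderedRing R] {a b : R} (hab : 0 < a * b) (hsum : 0 ≤ a + b) : 0 < a ∧ 0 < b := by
  rcases pos_and_pos_or_neg_and_neg_of_mul_pos hab with hpos | ⟨ha, hb⟩
  · exact hpos
  · exact absurd hsum (add_neg ha hb).not_ge

theorem babFinal_eq_zero {α β v θ ω t₁ t₂ t₃ s₃ s₄ : ℝ} (hα : α ≠ 0) (hβ : β ≠ 0)
    (hH1 : H1 α v θ ω = -(2 * α * ω) * t₁) (ht₂ : t₂ = |ω| / α) (hsum : t₁ + t₃ = |v| / β)
    (hs₃v : s₃ * v = -|v|) (hs₄ω : s₄ * ω = -|ω|) :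
    babFinal α β v θ ω t₁ t₂ t₃ s₃ s₄ = (0, 0, 0) := by
  have hαt₂ : α * t₂ = |ω| := by rw [ht₂, mul_div_cancel₀ _ hα]
  have hωf : ω + s₄ * α * t₂ = 0 := by
    rw [mul_assoc, hαt₂, mul_abs_eq_neg_of_mul_eq_neg_abs hs₄ω, add_neg_cancel]
  simp only [babFinal, Prod.mk.injEq]
  refine ⟨?_, ?_, hωf⟩
  · rw [hsum, mul_assoc, mul_div_cancel₀ _ hβ, mul_abs_eq_neg_of_mul_eq_neg_abs hs₃v,
      add_neg_cancel]
  · unfold H1 at hH1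
    rw [hωf, zero_mul, add_zero]
    have hsq : s₄ * α * t₂ ^ 2 = -(ω * t₂) := by linear_combination t₂ * hωf
    have hθf : 2 * α * (θ + ω * t₁ + ω * t₂ / 2) = 0 := by
      linear_combination hH1 + ω * hαt₂
    linear_combination (mul_eq_zero.mp hθf).resolve_left (mul_ne_zero two_ne_zero hα) + hsq / 2

theorem stmt6_general (α β v θ ω : ℝ) (hα : 0 < α) (hβ : 0 < β)
    (h : H1 α v θ ω * H2 α β v θ ω < 0)
    (t₁ t₂ t₃ : ℝ)
    (ht₁ : t₁ = -(H1 α v θ ω) / (2 * α * ω))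
    (ht₂ : t₂ = |ω| / α)
    (ht₃ : t₃ = |v| / β - t₁)
    (s₃ s₄ : ℝ)
    (hs₃v : s₃ * v = -|v|) (hs₄ω : s₄ * ω = -|ω|) :
    0 < t₁ ∧ 0 < t₃ ∧ babFinal α β v θ ω t₁ t₂ t₃ s₃ s₄ = (0, 0, 0) := by
  have hω : ω ≠ 0 := ne_zero_of_H1_mul_H2_neg hα h
  have hH1 : H1 α v θ ω = -(2 * α * ω) * t₁ := by rw [ht₁]; field_simp
  have hH2 : H2 α β v θ ω = ω * t₃ := by rw [ht₃, ht₁]; unfold H1 H2; field_simp; ring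
  have hsum : t₁ + t₃ = |v| / β := by rw [ht₃]; ring
  have hprod : 0 < t₁ * t₃ := by
    have h' : -(2 * α * ω ^ 2) * (t₁ * t₃) < 0 := by rw [hH1, hH2] at h; linarith
    exact pos_of_mul_neg_right h' (by nlinarith [sq_nonneg ω])
  obtain ⟨ht₁pos, ht₃pos⟩ := pos_and_pos_of_mul_pos_of_add_nonneg hprod (by rw [hsum]; positivity)
  exact ⟨ht₁pos, ht₃pos, babFinal_eq_zero hα.ne' hβ.ne' hH1 ht₂ hsum hs₃v hs₄ω⟩

theorem stmt6 (α β v θ ω : ℝ) (hα : 0 < α) (hβ : 0 < β)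
    (h : H1 α v θ ω * H2 α β v θ ω < 0)
    (t₁ t₂ t₃ : ℝ)
    (ht₁ : t₁ = -(H1 α v θ ω) / (2 * α * ω))
    (ht₂ : t₂ = |ω| / α)
    (ht₃ : t₃ = |v| / β - t₁)
    (s₃ s₄ : ℝ) (hs₃ : s₃ = -1 ∨ s₃ = 1) (hs₄ : s₄ = -1 ∨ s₄ = 1)
    (hs₃v : s₃ * v = -|v|) (hs₄ω : s₄ * ω = -|ω|) :
    0 < t₁ ∧ 0 < t₃ ∧ babFinal α β v θ ω t₁ t₂ t₃ s₃ s₄ = (0, 0, 0) :=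
  stmt6_general α β v θ ω hα hβ h t₁ t₂ t₃ ht₁ ht₂ ht₃ s₃ s₄ hs₃v hs₄ω
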